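/- If s_1, ..., s_{n+1} are exchangeable real-valued random variables such that ties among them occur with probability zero, then for any p in (0,1), P(s_{n+1} ≤ Q(p, s_{1:n} ∪ {∞})) ≤ p + 1/(n+1), where Q is the empirical quantile function. -/

import Mathlib

open MeasureTheory ProbabilityTheory

/-- Empirical `p`-quantile of the multiset `{s 0, ..., s (n-1)} ∪ {∞}` (of size `n+1`). -/
noncomputable def empQuantile (n : ℕ) (s : Fin n → ℝ) (p : ℝ) : ℝ :=
  sInf {t : ℝ | p ≤ ((Finset.univ.filter (fun i => s i ≤ t)).card : ℝ) / (n + 1)}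

/-!
Let `R` be the rank of `s n` among `s 0, …, s n`, counted with `≤`. Off the null set of ties,
`s n ≤ Q(p, s_{1:n} ∪ {∞})` forces `R < p (n + 1) + 1`: otherwise the largest of the `s i`
strictly below `s n` would already be a `p`-quantile. For any `c ≥ 0` and any vector, at most `c`
coordinates have rank `< c`, so the `n + 1` events `{rank of s j < c}` have expected total count
at most `c`; by exchangeability they are equiprobable, hence each has probability at most
`c / (n + 1)`.
-/

open Finset
open scoped ENNReal

namespace ConformalQuantile

variable {ι : Type*} {Ω : Type*} [MeasurableSpace Ω] {μ : Measure Ω} {s : Ω → ι → ℝ}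

def Exchangeable (μ : Measure Ω) (s : Ω → ι → ℝ) : Prop :=
  ∀ π : Equiv.Perm ι, μ.map (fun ω => s ω ∘ π) = μ.map s

theorem Exchangeable.measure_preimage_comp_perm (hexch : Exchangeable μ s) (hs : Measurable s)
    (π : Equiv.Perm ι) {B : Set (ι → ℝ)} (hB : MeasurableSet B) :
    μ ((fun ω => s ω ∘ π) ⁻¹' B) = μ (s ⁻¹' B) := by
  have hsπ : Measurable fun ω => s ω ∘ π :=
    measurable_pi_lambda _ fun i => (measurable_pi_apply (π i)).comp hs
  rw [← Measure.map_apply hsπ hB, hexch π, Measure.map_apply hs hB]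

theorem ae_injective_of_measure_eq_eq_zero [Countable ι]
    (hties : ∀ i j : ι, i ≠ j → μ {ω | s ω i = s ω j} = 0) :
    ∀ᵐ ω ∂μ, Function.Injective (s ω) := by
  have h : ∀ i j : ι, ∀ᵐ ω ∂μ, s ω i = s ω j → i = j := fun i j => by
    by_cases hij : i = j
    · exact Filter.Eventually.of_forall fun _ _ => hij
    · exact (measure_eq_zero_iff_ae_notMem.1 (hties i j hij)).mono fun _ h he => absurd he h
  filter_upwards [ae_all_iff.2 fun i => ae_all_iff.2 (h i)] with ω hω i j using hω i j

section Rank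

variable [Fintype ι]

noncomputable def rank (v : ι → ℝ) (j : ι) : ℕ := #{i | v i ≤ v j}

theorem card_rank_lt_le (v : ι → ℝ) {c : ℝ} (hc : 0 ≤ c) :
    (#{j | (rank v j : ℝ) < c} : ℝ) ≤ c := by
  set J : Finset ι := {j | (rank v j : ℝ) < c}
  rcases J.eq_empty_or_nonempty with hJ | hJ
  · simpa [hJ] using hc
  -- every member of `J` lies weakly below the largest one, whose rank is `< c`
  obtain ⟨j₀, hj₀, hmax⟩ := J.exists_max_image v hJ
  calc (#J : ℝ) ≤ rank v j₀ := by
        exact_mod_cast card_le_card fun i hi => mem_filter.2 ⟨mem_univ i, hmax i hi⟩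
    _ ≤ c := (mem_filter.1 hj₀).2.le

theorem rank_comp_perm (v : ι → ℝ) (σ : Equiv.Perm ι) (j : ι) :
    rank (v ∘ σ) j = rank v (σ j) :=
  card_equiv σ (by simp)

theorem measurable_rank (j : ι) : Measurable fun v : ι → ℝ => rank v j := by
  simp only [rank, card_filter]
  exact Finset.measurable_sum _ fun i _ =>
    Measurable.ite (measurableSet_le (measurable_pi_apply i) (measurable_pi_apply j))
      measurable_const measurable_const

theorem measurableSet_rank_lt (j : ι) (c : ℝ) :
    MeasurableSet {v : ι → ℝ | (rank v j : ℝ) < c} :=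
  measurable_rank j (MeasurableSet.of_discrete (s := {k : ℕ | (k : ℝ) < c}))

theorem Exchangeable.measure_rank_lt_eq (hexch : Exchangeable μ s) (hs : Measurable s)
    (c : ℝ) (j j' : ι) :
    μ {ω | (rank (s ω) j : ℝ) < c} = μ {ω | (rank (s ω) j' : ℝ) < c} := by
  classical
  have := hexch.measure_preimage_comp_perm hs (Equiv.swap j j') (measurableSet_rank_lt j' c)
  simpa [Set.preimage, rank_comp_perm] using this

theorem sum_measure_rank_lt_le [IsProbabilityMeasure μ] (hs : Measurable s) {c : ℝ}
    (hc : 0 ≤ c) : ∑ j, μ {ω | (rank (s ω) j : ℝ) < c} ≤ ENNReal.ofReal c := by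
  have hA : ∀ j, MeasurableSet {ω | (rank (s ω) j : ℝ) < c} :=
    fun j => hs (measurableSet_rank_lt j c)
  calc ∑ j, μ {ω | (rank (s ω) j : ℝ) < c}
      = ∫⁻ ω, ∑ j, {ω | (rank (s ω) j : ℝ) < c}.indicator 1 ω ∂μ := by
        rw [lintegral_finsetSum _ fun j _ => measurable_one.indicator (hA j)]
        simp only [lintegral_indicator_one (hA _)]
    _ ≤ ∫⁻ _, ENNReal.ofReal c ∂μ := lintegral_mono fun ω => by
        simp only [Set.indicator_apply, Set.mem_ofPred_eq, Pi.one_apply, sum_boole]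
        rw [← ENNReal.ofReal_natCast]
        exact ENNReal.ofReal_le_ofReal (card_rank_lt_le (s ω) hc)
    _ = ENNReal.ofReal c := by simp

theorem Exchangeable.measure_rank_lt_le [IsProbabilityMeasure μ] (hexch : Exchangeable μ s)
    (hs : Measurable s) {c : ℝ} (hc : 0 ≤ c) (j : ι) :
    μ {ω | (rank (s ω) j : ℝ) < c} ≤ ENNReal.ofReal (c / Fintype.card ι) := by
  have hsum := sum_measure_rank_lt_le hs hc (μ := μ)
  rw [sum_congr rfl fun j' _ => hexch.measure_rank_lt_eq hs c j' j, sum_const, card_univ,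
    nsmul_eq_mul] at hsum
  have hcard : 0 < Fintype.card ι := Fintype.card_pos_iff.2 ⟨j⟩
  rw [ENNReal.ofReal_div_of_pos (Nat.cast_pos.2 hcard), ENNReal.ofReal_natCast,
    ENNReal.le_div_iff_mul_le (Or.inl (by simpa using hcard.ne')) (by simp), mul_comm]
  exact hsum

end Rank

theorem card_lt_of_le_empQuantile {n : ℕ} (v : Fin n → ℝ) {p y : ℝ} (hp : 0 < p)
    (hy : y ≤ empQuantile n v p) : (#{i | v i < y} : ℝ) < p * (n + 1) := by
  by_contra! hA
  have hn : (0 : ℝ) < n + 1 := by positivity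
  obtain ⟨i₀, hi₀, hmax⟩ := ({i | v i < y} : Finset (Fin n)).exists_max_image v
    (card_pos.1 (by exact_mod_cast (mul_pos hp hn).trans_le hA))
  -- `p > 0` keeps the set bounded below, so its `sInf` is not the junk value `0`
  have hbdd : BddBelow {t : ℝ | p ≤ (#{i | v i ≤ t} : ℝ) / (n + 1)} := by
    refine ⟨⨅ i, v i, fun t ht => ?_⟩
    obtain ⟨i, hi⟩ : ({i | v i ≤ t} : Finset (Fin n)).Nonempty := by
      rw [← card_pos, Nat.pos_iff_ne_zero]
      rintro h0
      simp only [Set.mem_ofPred_eq, h0, CharP.cast_eq_zero, zero_div] at ht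
      linarith
    exact (ciInf_le (Set.finite_range v).bddBelow i).trans (mem_filter.1 hi).2
  have hmem : v i₀ ∈ {t : ℝ | p ≤ (#{i | v i ≤ t} : ℝ) / (n + 1)} := by
    rw [Set.mem_ofPred_eq, le_div_iff₀ hn]
    refine hA.trans ?_
    exact_mod_cast card_le_card fun i hi => mem_filter.2 ⟨mem_univ i, hmax i hi⟩
  exact (mem_filter.1 hi₀).2.not_ge (hy.trans (csInf_le hbdd hmem))

theorem rank_last_eq {n : ℕ} {v : Fin (n + 1) → ℝ} (hv : Function.Injective v) :
    rank v (Fin.last n) = #{i : Fin n | v i.castSucc < v (Fin.last n)} + 1 := by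
  simp only [rank, card_filter, Fin.sum_univ_castSucc, le_refl, if_true]
  congr 1
  refine sum_congr rfl fun i _ => ?_
  simp only [(hv.ne (Fin.castSucc_lt_last i).ne).le_iff_lt]

theorem rank_last_lt_of_le_empQuantile {n : ℕ} {v : Fin (n + 1) → ℝ}
    (hv : Function.Injective v) {p : ℝ} (hp : 0 < p)
    (h : v (Fin.last n) ≤ empQuantile n (fun i => v i.castSucc) p) :
    (rank v (Fin.last n) : ℝ) < p * (n + 1) + 1 := by
  rw [rank_last_eq hv, Nat.cast_succ]
  exact add_lt_add_left (card_lt_of_le_empQuantile _ hp h) 1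

end ConformalQuantile

open ConformalQuantile

/-- If `s 0, ..., s n` are exchangeable real random variables and ties occur with
probability zero, then for any `p ∈ (0,1)`,
`P(s n ≤ Q(p, {s 0,…,s (n-1)} ∪ {∞})) ≤ p + 1/(n+1)`. -/
theorem conformal_quantile_lemma_upper
    {Ω : Type*} [MeasurableSpace Ω] (μ : Measure Ω) [IsProbabilityMeasure μ]
    (n : ℕ) (s : Ω → Fin (n + 1) → ℝ) (hs : Measurable s)
    (hexch : ∀ π : Equiv.Perm (Fin (n + 1)),
      Measure.map (fun ω => s ω ∘ π) μ = Measure.map s μ)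
    (hties : ∀ i j : Fin (n + 1), i ≠ j → μ {ω | s ω i = s ω j} = 0)
    (p : ℝ) (hp : p ∈ Set.Ioo (0 : ℝ) 1) :
    μ {ω | s ω (Fin.last n) ≤ empQuantile n (fun i => s ω i.castSucc) p} ≤
      ENNReal.ofReal (p + 1 / (n + 1)) := by
  have hn : (0 : ℝ) < n + 1 := by positivity
  calc μ {ω | s ω (Fin.last n) ≤ empQuantile n (fun i => s ω i.castSucc) p}
      ≤ μ {ω | (rank (s ω) (Fin.last n) : ℝ) < p * (n + 1) + 1} :=
        measure_mono_ae <| (ae_injective_of_measure_eq_eq_zero hties).mono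
          fun ω hω h => rank_last_lt_of_le_empQuantile hω hp.1 h
    _ ≤ ENNReal.ofReal ((p * (n + 1) + 1) / Fintype.card (Fin (n + 1))) :=
        Exchangeable.measure_rank_lt_le hexch hs (by positivity [hp.1]) _
    _ = ENNReal.ofReal (p + 1 / (n + 1)) := by
        rw [Fintype.card_fin, Nat.cast_succ, add_div, mul_div_cancel_right₀ _ hn.ne']
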